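/- Let d ≥ 2. There exists a constant C > 0 (depending only on d) such that for all t > 0 and all x, y ∈ ℝ^d₊: |∇_x (∇_x + ∇_y) H(x,y,t)| ≤ C t^{−d/2 − 1} (1 + |x'−y'|/√t) (1 + (x_d+y_d)²/t) e^{−|x'−y'|²/(4t)} e^{−(x_d+y_d)²/(4t)}, where ∇_x(∇_x+∇_y)H denotes the matrix of second derivatives ∂_{x_k}(∂_{x_i}+∂_{y_i})H. -/

import Mathlib

open MeasureTheory Real Set

/-- One-dimensional Gaussian heat kernel `G_t(ξ) = (4πt)^{−1/2} e^{−ξ²/(4t)}`. -/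
noncomputable def G1 (t ξ : ℝ) : ℝ := (4 * π * t) ^ (-(1 : ℝ) / 2) * Real.exp (-ξ ^ 2 / (4 * t))

/-- `(d−1)`-dimensional Gaussian heat kernel (here `d = n+2`, so `d−1 = n+1`):
`G_t^{(d−1)}(v) = (4πt)^{−(d−1)/2} e^{−|v|²/(4t)}`. -/
noncomputable def Gtan (n : ℕ) (t : ℝ) (v : Fin (n + 1) → ℝ) : ℝ :=
  (4 * π * t) ^ (-((n : ℝ) + 1) / 2) * Real.exp (-(∑ i, (v i) ^ 2) / (4 * t))

/-- Half-space Dirichlet heat kernel in dimension `d = n+2`: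
`H(x,y,t) = G_t^{(d−1)}(x'−y') (G_t(x_d−y_d) − G_t(x_d+y_d))`. -/
noncomputable def H (n : ℕ) (t : ℝ) (x y : Fin (n + 2) → ℝ) : ℝ :=
  Gtan n t (fun i => x i.castSucc - y i.castSucc) *
    (G1 t (x (Fin.last (n + 1)) - y (Fin.last (n + 1))) -
      G1 t (x (Fin.last (n + 1)) + y (Fin.last (n + 1))))

/-- Component `i` of the vector `(∇_x + ∇_y) H(x,y,t)`. -/
noncomputable def D1 (n : ℕ) (t : ℝ) (i : Fin (n + 2)) (x y : Fin (n + 2) → ℝ) : ℝ :=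
  deriv (fun s => H n t (Function.update x i s) y) (x i) +
    deriv (fun s => H n t x (Function.update y i s)) (y i)

/-- Entry `(k,i)` of the matrix `∇_x (∇_x + ∇_y) H(x,y,t)`, i.e. `∂_{x_k}(∂_{x_i}+∂_{y_i})H`. -/
noncomputable def D2 (n : ℕ) (t : ℝ) (k i : Fin (n + 2)) (x y : Fin (n + 2) → ℝ) : ℝ :=
  deriv (fun s => D1 n t i (Function.update x k s) y) (x k)

/-!
Since `∂_{x_i} + ∂_{y_i}` annihilates every function of `x - y`, it kills the tangential Gaussian
and the term `G_t(x_d - y_d)`, so the only nonzero component of `(∇_x + ∇_y) H` is the last one,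
`G_t^{(d-1)}(x' - y') G_t(σ) σ / t` with `σ = x_d + y_d`. Differentiating once more in `x` gives the
entries `G_t^{(d-1)} G_t(σ)` times `-(x_k - y_k) σ / (2t²)` and `1/t - σ²/(2t²)`, so with
`r = |x' - y'|` the Frobenius norm is at most
`G_t^{(d-1)} G_t(σ) (σ r / (2t²) + |1/t - σ²/(2t²)|) ≤ G_t^{(d-1)} G_t(σ) t⁻¹ (1 + r/√t)(1 + σ²/t)`,
and `C = (4π)^{-d/2}` works.
-/

open Function

lemma hasDerivAt_const_mul_exp_neg_sq_add (c a t u : ℝ) :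
    HasDerivAt (fun u => c * Real.exp (-(u ^ 2 + a) / (4 * t)))
      (c * Real.exp (-(u ^ 2 + a) / (4 * t)) * (-u / (2 * t))) u := by
  have h := (((hasDerivAt_pow 2 u).add_const a).fun_neg.div_const (4 * t)).exp.const_mul c
  refine h.congr_deriv ?_
  push_cast
  ring

section Gaussian

variable {n : ℕ} {t : ℝ}

lemma G1_pos (ht : 0 < t) (ξ : ℝ) : 0 < G1 t ξ := by
  unfold G1; positivity

lemma Gtan_pos (ht : 0 < t) (v : Fin (n + 1) → ℝ) : 0 < Gtan n t v := by
  unfold Gtan; positivity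

lemma hasDerivAt_G1 (ξ : ℝ) : HasDerivAt (G1 t) (G1 t ξ * (-ξ / (2 * t))) ξ := by
  have h := hasDerivAt_const_mul_exp_neg_sq_add ((4 * π * t) ^ (-(1 : ℝ) / 2)) 0 t ξ
  simp only [add_zero] at h
  exact h

lemma hasDerivAt_G1_mul_div (σ : ℝ) :
    HasDerivAt (fun σ => G1 t σ * (σ / t)) (G1 t σ * (1 / t - σ ^ 2 / (2 * t ^ 2))) σ := by
  refine ((hasDerivAt_G1 σ).mul ((hasDerivAt_id σ).div_const t)).congr_deriv ?_
  simp only [id_eq]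
  ring

lemma deriv_G1_sub_sub_add (p q : ℝ) :
    deriv (fun s => G1 t (s - q) - G1 t (s + q)) p +
      deriv (fun s => G1 t (p - s) - G1 t (p + s)) q =
      G1 t (p + q) * ((p + q) / t) := by
  have hp := ((hasDerivAt_G1 (t := t) _).comp_sub_const p q).fun_sub
    ((hasDerivAt_G1 (t := t) _).comp_add_const p q)
  have hq := ((hasDerivAt_G1 (t := t) _).comp_const_sub p q).fun_sub
    ((hasDerivAt_G1 (t := t) _).comp_const_add p q)
  rw [hp.deriv, hq.deriv]
  ring

lemma hasDerivAt_Gtan_update (v : Fin (n + 1) → ℝ) (j : Fin (n + 1)) (u : ℝ) :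
    HasDerivAt (fun u => Gtan n t (update v j u)) (Gtan n t (update v j u) * (-u / (2 * t))) u := by
  have hsum : ∀ u, ∑ i, update v j u i ^ 2 = u ^ 2 + ∑ i ∈ Finset.univ \ {j}, v i ^ 2 := fun u => by
    rw [← Finset.sum_update_of_mem (Finset.mem_univ j)]
    exact Finset.sum_congr rfl fun i _ => apply_update (fun _ (w : ℝ) => w ^ 2) v j u i
  simp only [Gtan, hsum]
  exact hasDerivAt_const_mul_exp_neg_sq_add _ _ t u

lemma Gtan_mul_G1 (ht : 0 < t) (v : Fin (n + 1) → ℝ) (ξ : ℝ) :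
    Gtan n t v * G1 t ξ = (4 * π) ^ (-((n : ℝ) + 2) / 2) * t ^ (-((n : ℝ) + 2) / 2) *
      Real.exp (-(∑ i, v i ^ 2) / (4 * t)) * Real.exp (-ξ ^ 2 / (4 * t)) := by
  have hpow : (4 * π * t) ^ (-((n : ℝ) + 1) / 2) * (4 * π * t) ^ (-(1 : ℝ) / 2) =
      (4 * π) ^ (-((n : ℝ) + 2) / 2) * t ^ (-((n : ℝ) + 2) / 2) := by
    rw [← Real.rpow_add (by positivity), ← Real.mul_rpow (by positivity) ht.le]
    ring_nf
  unfold Gtan G1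
  rw [← hpow]
  ring

end Gaussian

section HalfSpaceKernel

variable {n : ℕ} {t : ℝ} (x y : Fin (n + 2) → ℝ)

lemma H_eq : H n t x y = Gtan n t (Fin.init x - Fin.init y) *
    (G1 t (x (Fin.last (n + 1)) - y (Fin.last (n + 1))) -
      G1 t (x (Fin.last (n + 1)) + y (Fin.last (n + 1)))) := rfl

lemma update_castSucc_last (j : Fin (n + 1)) (s : ℝ) :
    update x j.castSucc s (Fin.last (n + 1)) = x (Fin.last (n + 1)) :=
  update_of_ne (Fin.castSucc_lt_last j).ne' _ _

lemma init_update_castSucc_sub (j : Fin (n + 1)) (s : ℝ) :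
    Fin.init (update x j.castSucc s) - Fin.init y =
      update (Fin.init x - Fin.init y) j (s - y j.castSucc) := by
  rw [Fin.init_update_castSucc]
  ext i
  rcases eq_or_ne i j with rfl | hij <;> simp [Fin.init, *]

lemma init_sub_init_update_castSucc (j : Fin (n + 1)) (s : ℝ) :
    Fin.init x - Fin.init (update y j.castSucc s) =
      update (Fin.init x - Fin.init y) j (x j.castSucc - s) := by
  rw [Fin.init_update_castSucc]
  ext i
  rcases eq_or_ne i j with rfl | hij <;> simp [Fin.init, *]

lemma D1_castSucc (j : Fin (n + 1)) : D1 n t j.castSucc x y = 0 := by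
  set K := G1 t (x (Fin.last (n + 1)) - y (Fin.last (n + 1))) -
    G1 t (x (Fin.last (n + 1)) + y (Fin.last (n + 1)))
  set φ := fun u => Gtan n t (update (Fin.init x - Fin.init y) j u) * K
  have hx : (fun s => H n t (update x j.castSucc s) y) = fun s => φ (s - y j.castSucc) := by
    funext s
    rw [H_eq, init_update_castSucc_sub, update_castSucc_last]
  have hy : (fun s => H n t x (update y j.castSucc s)) = fun s => φ (x j.castSucc - s) := by
    funext s
    rw [H_eq, init_sub_init_update_castSucc, update_castSucc_last]
  rw [D1, hx, hy, deriv_comp_sub_const, deriv_comp_const_sub, add_neg_cancel]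

lemma D1_last : D1 n t (Fin.last (n + 1)) x y = Gtan n t (Fin.init x - Fin.init y) *
    (G1 t (x (Fin.last (n + 1)) + y (Fin.last (n + 1))) *
      ((x (Fin.last (n + 1)) + y (Fin.last (n + 1))) / t)) := by
  simp only [D1, H_eq, Fin.init_update_last, update_self, deriv_const_mul_field']
  rw [← mul_add, deriv_G1_sub_sub_add]

lemma D2_col_castSucc (k : Fin (n + 2)) (j : Fin (n + 1)) : D2 n t k j.castSucc x y = 0 := by
  simp [D2, D1_castSucc]

lemma D2_castSucc_last (j : Fin (n + 1)) :
    D2 n t j.castSucc (Fin.last (n + 1)) x y =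
      Gtan n t (Fin.init x - Fin.init y) * (-(x j.castSucc - y j.castSucc) / (2 * t)) *
        (G1 t (x (Fin.last (n + 1)) + y (Fin.last (n + 1))) *
          ((x (Fin.last (n + 1)) + y (Fin.last (n + 1))) / t)) := by
  set M := G1 t (x (Fin.last (n + 1)) + y (Fin.last (n + 1))) *
    ((x (Fin.last (n + 1)) + y (Fin.last (n + 1))) / t)
  have h : (fun s => D1 n t (Fin.last (n + 1)) (update x j.castSucc s) y) =
      fun s => Gtan n t (update (Fin.init x - Fin.init y) j (s - y j.castSucc)) * M := by
    funext s
    rw [D1_last, init_update_castSucc_sub, update_castSucc_last]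
  have hd := (hasDerivAt_Gtan_update (t := t) (Fin.init x - Fin.init y) j
    (x j.castSucc - y j.castSucc)).mul_const M
  rw [show update (Fin.init x - Fin.init y) j (x j.castSucc - y j.castSucc) =
    Fin.init x - Fin.init y from update_eq_self j _] at hd
  rw [D2, h, deriv_comp_sub_const (f := fun u => Gtan n t (update _ j u) * M), hd.deriv]

lemma D2_last_last :
    D2 n t (Fin.last (n + 1)) (Fin.last (n + 1)) x y =
      Gtan n t (Fin.init x - Fin.init y) *
        (G1 t (x (Fin.last (n + 1)) + y (Fin.last (n + 1))) *
          (1 / t - (x (Fin.last (n + 1)) + y (Fin.last (n + 1))) ^ 2 / (2 * t ^ 2))) := by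
  have h : (fun s => D1 n t (Fin.last (n + 1)) (update x (Fin.last (n + 1)) s) y) =
      fun s => Gtan n t (Fin.init x - Fin.init y) *
        (G1 t (s + y (Fin.last (n + 1))) * ((s + y (Fin.last (n + 1))) / t)) := by
    funext s
    rw [D1_last, Fin.init_update_last, update_self]
  rw [D2, h, deriv_const_mul_field']
  beta_reduce
  rw [deriv_comp_add_const (f := fun σ => G1 t σ * (σ / t)), (hasDerivAt_G1_mul_div _).deriv]

lemma sum_sq_D2 : ∑ k, ∑ i, D2 n t k i x y ^ 2 =
    (Gtan n t (Fin.init x - Fin.init y) * G1 t (x (Fin.last (n + 1)) + y (Fin.last (n + 1)))) ^ 2 *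
      (((x (Fin.last (n + 1)) + y (Fin.last (n + 1))) / (2 * t ^ 2)) ^ 2 *
          ∑ j : Fin (n + 1), (x j.castSucc - y j.castSucc) ^ 2 +
        (1 / t - (x (Fin.last (n + 1)) + y (Fin.last (n + 1))) ^ 2 / (2 * t ^ 2)) ^ 2) := by
  have hcol : ∀ k, ∑ i, D2 n t k i x y ^ 2 = D2 n t k (Fin.last (n + 1)) x y ^ 2 := fun k => by
    simp [Fin.sum_univ_castSucc, D2_col_castSucc]
  simp only [hcol, Fin.sum_univ_castSucc (n := n + 1), D2_castSucc_last, D2_last_last,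
    Finset.mul_sum]
  rw [mul_add, Finset.mul_sum]
  congr 1
  · exact Finset.sum_congr rfl fun j _ => by ring
  · ring

end HalfSpaceKernel

lemma sqrt_sq_mul_add_sq_le (a b c : ℝ) (hb : 0 ≤ b) : √(a ^ 2 * b + c ^ 2) ≤ |a| * √b + |c| := by
  refine Real.sqrt_le_iff.mpr ⟨by positivity, ?_⟩
  have hcross := mul_nonneg (mul_nonneg (abs_nonneg a) (abs_nonneg c)) (Real.sqrt_nonneg b)
  nlinarith [Real.sq_sqrt hb, sq_abs a, sq_abs c]

lemma mul_div_add_abs_sub_le {t r σ : ℝ} (ht : 0 < t) (hr : 0 ≤ r) (hσ : 0 ≤ σ) :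
    σ / (2 * t ^ 2) * r + |1 / t - σ ^ 2 / (2 * t ^ 2)| ≤ t⁻¹ * (1 + r / √t) * (1 + σ ^ 2 / t) := by
  obtain ⟨τ, hτ, rfl⟩ : ∃ τ, 0 < τ ∧ τ ^ 2 = t := ⟨√t, Real.sqrt_pos.2 ht, Real.sq_sqrt ht.le⟩
  rw [Real.sqrt_sq hτ.le]
  have habs : |1 / τ ^ 2 - σ ^ 2 / (2 * (τ ^ 2) ^ 2)| ≤ 1 / τ ^ 2 + σ ^ 2 / (2 * (τ ^ 2) ^ 2) := by
    refine (abs_sub _ _).trans_eq ?_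
    rw [abs_of_pos (by positivity), abs_of_nonneg (by positivity)]
  -- `στ ≤ (σ² + τ²)/2` absorbs the cross term
  have hpoly : σ * r * τ / 2 + τ ^ 3 + σ ^ 2 * τ / 2 ≤ (τ + r) * (τ ^ 2 + σ ^ 2) := by
    nlinarith [mul_nonneg hr (sq_nonneg (σ - τ)), mul_nonneg hσ (mul_nonneg hσ hτ.le)]
  have hlhs : σ / (2 * (τ ^ 2) ^ 2) * r + (1 / τ ^ 2 + σ ^ 2 / (2 * (τ ^ 2) ^ 2)) =
      (σ * r * τ / 2 + τ ^ 3 + σ ^ 2 * τ / 2) / τ ^ 5 := by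
    field_simp
    ring
  have hrhs :
      (τ ^ 2)⁻¹ * (1 + r / τ) * (1 + σ ^ 2 / τ ^ 2) = (τ + r) * (τ ^ 2 + σ ^ 2) / τ ^ 5 := by
    field_simp
  calc _ ≤ σ / (2 * (τ ^ 2) ^ 2) * r + (1 / τ ^ 2 + σ ^ 2 / (2 * (τ ^ 2) ^ 2)) := by gcongr
    _ ≤ _ := by
      rw [hlhs, hrhs]
      gcongr

/-- For `d = n+2 ≥ 2` there is `C > 0` (depending only on `d`) such that for all
`t > 0` and all `x, y` in the half space:
`|∇_x(∇_x+∇_y)H(x,y,t)| ≤ C t^{−d/2−1} (1+|x'−y'|/√t)(1+(x_d+y_d)²/t)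
  e^{−|x'−y'|²/(4t)} e^{−(x_d+y_d)²/(4t)}`. -/
theorem stmt_7 (n : ℕ) :
    ∃ C : ℝ, 0 < C ∧ ∀ t : ℝ, 0 < t → ∀ x y : Fin (n + 2) → ℝ,
      0 < x (Fin.last (n + 1)) → 0 < y (Fin.last (n + 1)) →
      Real.sqrt (∑ k, ∑ i, (D2 n t k i x y) ^ 2) ≤
        C * t ^ (-((n : ℝ) + 2) / 2 - 1) *
          (1 + Real.sqrt (∑ i : Fin (n + 1), (x i.castSucc - y i.castSucc) ^ 2) / Real.sqrt t) *
          (1 + (x (Fin.last (n + 1)) + y (Fin.last (n + 1))) ^ 2 / t) *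
          Real.exp (-(∑ i : Fin (n + 1), (x i.castSucc - y i.castSucc) ^ 2) / (4 * t)) *
          Real.exp (-(x (Fin.last (n + 1)) + y (Fin.last (n + 1))) ^ 2 / (4 * t)) := by
  refine ⟨(4 * π) ^ (-((n : ℝ) + 2) / 2), by positivity, fun t ht x y hx hy => ?_⟩
  set σ := x (Fin.last (n + 1)) + y (Fin.last (n + 1))
  set r := √(∑ i : Fin (n + 1), (x i.castSucc - y i.castSucc) ^ 2)
  have hG := (mul_pos (Gtan_pos ht (Fin.init x - Fin.init y)) (G1_pos ht σ)).le
  calc √(∑ k, ∑ i, D2 n t k i x y ^ 2)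
      ≤ Gtan n t (Fin.init x - Fin.init y) * G1 t σ *
          (|σ / (2 * t ^ 2)| * r + |1 / t - σ ^ 2 / (2 * t ^ 2)|) := by
        rw [sum_sq_D2, Real.sqrt_mul' _ (by positivity), Real.sqrt_sq hG]
        gcongr
        exact sqrt_sq_mul_add_sq_le _ _ _ (by positivity)
    _ ≤ Gtan n t (Fin.init x - Fin.init y) * G1 t σ * (t⁻¹ * (1 + r / √t) * (1 + σ ^ 2 / t)) := by
        rw [abs_of_nonneg (by positivity)]
        gcongr
        exact mul_div_add_abs_sub_le ht (Real.sqrt_nonneg _) (by positivity)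
    _ = _ := by
        rw [Gtan_mul_G1 ht, Real.rpow_sub_one ht.ne']
        simp only [Pi.sub_apply, Fin.init]
        ring
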